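/- arXiv:2008.09345 — 2 statements merged into one kernel-verified Lean document; each statement's English description precedes it below -/
import Mathlib

section
/- The infimum of the norm over the Nehari manifold is positive: inf{‖ψ‖_H : ψ ∈ H, ψ ≠ 0, I'[ψ]ψ = 0} > 0. -/
/-!
On the Nehari manifold `‖ψ‖² = 2π²λ ∫ (ψ - r² - γ)₊^{2q-1} ψ r⁻¹`, so it suffices to bound this
integral by `C ‖ψ‖^{2(q+2)}`. Where the integrand is nonzero we have `ψ > γ`, so it is at most
`γ⁻⁴ ψ^{2q+4} r⁻¹ = γ⁻⁴ (ψ² r⁻³)^{1/3} (ψ^{3q+5})^{2/3}`. Hölder's inequality with exponents `3`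
and `3/2` splits the integral into two factors: the first is controlled by the Hardy inequality
`∫ ψ² r⁻³ ≤ ∫ (∂_r ψ)² r⁻¹` (`ψ` vanishes on `r = 0`), the second by the two-dimensional Sobolev
embedding of `H¹₀` into `L^{3q+5}` on the bounded half disk, where `r ≤ R` lets the weighted norm
dominate the unweighted one. Hence `‖ψ‖² ≤ C ‖ψ‖^{2(q+2)}`, which bounds `‖ψ‖` from below.
-/

open Real MeasureTheory Set Filter

noncomputable section

/-- `∂_z` of a function of `(z,r)`. -/
def pz2 (f : ℝ × ℝ → ℝ) (x : ℝ × ℝ) : ℝ := fderiv ℝ f x (1, 0)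

/-- `∂_r` of a function of `(z,r)`. -/
def pr2 (f : ℝ × ℝ → ℝ) (x : ℝ × ℝ) : ℝ := fderiv ℝ f x (0, 1)

/-- `|∇ψ|²` for a function of `(z,r)`. -/
def gradsq (f : ℝ × ℝ → ℝ) (x : ℝ × ℝ) : ℝ := pz2 f x ^ 2 + pr2 f x ^ 2

/-- The half disk `D = {(z,r) : r > 0, z² + r² < R²}`. -/
def halfDisk (R : ℝ) : Set (ℝ × ℝ) := {x | 0 < x.2 ∧ x.1 ^ 2 + x.2 ^ 2 < R ^ 2}

/-- The squared norm of the weighted Sobolev space `H(D;r⁻¹)`: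
`‖ψ‖² = 2π² ∫_D |∇ψ|² r⁻¹ dz dr`. -/
def Hnormsq (D : Set (ℝ × ℝ)) (ψ : ℝ × ℝ → ℝ) : ℝ :=
  2 * π ^ 2 * ∫ x in D, gradsq ψ x / x.2

/-- `J[ψ] = (π²λ/q) ∫_D (ψ - r² - γ)₊^{2q} r⁻¹ dz dr`. -/
def Jfun (D : Set (ℝ × ℝ)) (q lam gam : ℝ) (ψ : ℝ × ℝ → ℝ) : ℝ :=
  (π ^ 2 * lam / q) * ∫ x in D, (max (ψ x - x.2 ^ 2 - gam) 0) ^ (2 * q) / x.2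

/-- The functional `I[ψ] = ½‖ψ‖²_H - J[ψ]`. -/
def Ifun (D : Set (ℝ × ℝ)) (q lam gam : ℝ) (ψ : ℝ × ℝ → ℝ) : ℝ :=
  Hnormsq D ψ / 2 - Jfun D q lam gam ψ

/-- `I'[ψ]φ = 2π² ∫_D ∇ψ·∇φ r⁻¹ - 2π²λ ∫_D (ψ - r² - γ)₊^{2q-1} φ r⁻¹`. -/
def Iprime (D : Set (ℝ × ℝ)) (q lam gam : ℝ) (ψ φ : ℝ × ℝ → ℝ) : ℝ :=
  2 * π ^ 2 * (∫ x in D, (pz2 ψ x * pz2 φ x + pr2 ψ x * pr2 φ x) / x.2)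
    - 2 * π ^ 2 * lam * ∫ x in D, (max (ψ x - x.2 ^ 2 - gam) 0) ^ (2 * q - 1) * φ x / x.2

/-- `I'[ψ]ψ = ‖ψ‖²_H - 2π²λ ∫_D (ψ - r² - γ)₊^{2q-1} ψ r⁻¹`. -/
def IprimeSelf (D : Set (ℝ × ℝ)) (q lam gam : ℝ) (ψ : ℝ × ℝ → ℝ) : ℝ :=
  Hnormsq D ψ - 2 * π ^ 2 * lam *
    ∫ x in D, (max (ψ x - x.2 ^ 2 - gam) 0) ^ (2 * q - 1) * ψ x / x.2

/-- Admissible (test) functions of the weighted Sobolev space `H(D;r⁻¹)`: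
smooth, compactly supported in `D`. -/
def Adm (D : Set (ℝ × ℝ)) (ψ : ℝ × ℝ → ℝ) : Prop :=
  ContDiff ℝ (⊤ : ℕ∞) ψ ∧ HasCompactSupport ψ ∧ tsupport ψ ⊆ D

open scoped ENNReal NNReal
open Bornology Module

lemma lintegral_Ici_inv_sq {s : ℝ} (hs : 0 < s) :
    ∫⁻ r in Ici s, ENNReal.ofReal (1 / r ^ 2) = ENNReal.ofReal (1 / s) := by
  have hint : IntegrableOn (fun r : ℝ => r ^ (-2 : ℝ)) (Ioi s) :=
    integrableOn_Ioi_rpow_of_lt (by norm_num) hs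
  have hpow : EqOn (fun r : ℝ => ENNReal.ofReal (1 / r ^ 2))
      (fun r => ENNReal.ofReal (r ^ (-2 : ℝ))) (Ioi s) := fun r (hr : s < r) => by
    dsimp only
    rw [Real.rpow_neg (hs.trans hr).le, Real.rpow_two, one_div]
  rw [← Measure.restrict_congr_set Ioi_ae_eq_Ici, setLIntegral_congr_fun measurableSet_Ioi hpow,
    ← ofReal_integral_eq_lintegral_ofReal hint ((ae_restrict_iff' measurableSet_Ioi).2
      (.of_forall fun r (hr : s < r) => Real.rpow_nonneg (hs.trans hr).le _)),
    integral_Ioi_rpow_of_lt (by norm_num) hs]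
  norm_num [Real.rpow_neg_one]

lemma lintegral_Ioi_lintegral_Ioc_mul_inv_sq {h : ℝ → ℝ≥0∞} (hh : Measurable h) :
    ∫⁻ r in Ioi 0, (∫⁻ s in Ioc 0 r, h s) * ENNReal.ofReal (1 / r ^ 2)
      = ∫⁻ s in Ioi 0, h s * ENNReal.ofReal (1 / s) := by
  set F : ℝ → ℝ → ℝ≥0∞ := fun r s => (Iic r).indicator h s * ENNReal.ofReal (1 / r ^ 2)
  have hF : Measurable (Function.uncurry F) := by
    simp only [F, Function.uncurry_def, Set.indicator_apply, mem_Iic]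
    exact (Measurable.ite (measurableSet_le measurable_snd measurable_fst)
      (hh.comp measurable_snd) measurable_const).mul (by fun_prop)
  have inner_r (r : ℝ) :
      ∫⁻ s in Ioi 0, F r s = (∫⁻ s in Ioc 0 r, h s) * ENNReal.ofReal (1 / r ^ 2) := by
    rw [lintegral_mul_const _ (hh.indicator measurableSet_Iic),
      lintegral_indicator measurableSet_Iic, Measure.restrict_restrict measurableSet_Iic,
      Iic_inter_Ioi]
  have inner_s : ∀ s ∈ Ioi (0 : ℝ), ∫⁻ r in Ioi 0, F r s = h s * ENNReal.ofReal (1 / s) := by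
    intro s (hs : 0 < s)
    have hind (r : ℝ) :
        F r s = (Ici s).indicator (fun r => h s * ENNReal.ofReal (1 / r ^ 2)) r := by
      by_cases hsr : s ≤ r <;> simp [F, Set.indicator_apply, hsr]
    rw [lintegral_congr hind, lintegral_indicator measurableSet_Ici,
      Measure.restrict_restrict measurableSet_Ici, inter_eq_left.2 (Ici_subset_Ioi.2 hs),
      lintegral_const_mul _ (by fun_prop), lintegral_Ici_inv_sq hs]
  simp_rw [← inner_r]
  rw [lintegral_lintegral_swap hF.aemeasurable]
  exact setLIntegral_congr_fun measurableSet_Ioi inner_s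

lemma ofReal_sq_eq_enorm_sq (x : ℝ) : ENNReal.ofReal (x ^ 2) = ‖x‖ₑ ^ 2 := by
  rw [← Real.enorm_of_nonneg (sq_nonneg x), enorm_pow]

lemma eLpNorm_two_sq {α E : Type*} [MeasurableSpace α] [NormedAddCommGroup E] {μ : Measure α}
    (f : α → E) : eLpNorm f 2 μ ^ 2 = ∫⁻ x, ‖f x‖ₑ ^ 2 ∂μ := by
  have := eLpNorm_nnreal_pow_eq_lintegral (f := f) (μ := μ) (p := 2) two_ne_zero
  norm_num at this
  exact_mod_cast this

lemma ofReal_sq_le_lintegral_Ioc_mul {g g' : ℝ → ℝ} (hg : ∀ r, HasDerivAt g (g' r) r)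
    (hg' : Continuous g') (h0 : g 0 = 0) {r : ℝ} (hr : 0 ≤ r) :
    ENNReal.ofReal (g r ^ 2)
      ≤ (∫⁻ s in Ioc 0 r, ENNReal.ofReal (g' s ^ 2)) * ENNReal.ofReal r := by
  have hftc : ∫ s in Ioc 0 r, g' s = g r := by
    rw [← intervalIntegral.integral_of_le hr, intervalIntegral.integral_eq_sub_of_hasDerivAt
      (fun x _ => hg x) (hg'.intervalIntegrable 0 r), h0, sub_zero]
  have hL1 : ‖g r‖ₑ ≤ eLpNorm g' 1 (volume.restrict (Ioc 0 r)) := by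
    rw [eLpNorm_one_eq_lintegral_enorm, ← hftc]
    exact enorm_integral_le_lintegral_enorm _
  have hL2 := eLpNorm_le_eLpNorm_mul_rpow_measure_univ one_le_two
    hg'.aestronglyMeasurable (μ := volume.restrict (Ioc 0 r))
  rw [Measure.restrict_apply_univ, Real.volume_Ioc, sub_zero] at hL2
  have key := pow_le_pow_left' (hL1.trans hL2) 2
  rw [mul_pow, ← ENNReal.rpow_natCast, ← ENNReal.rpow_natCast (_ ^ _), ← ENNReal.rpow_mul] at key
  norm_num at key
  simpa only [ofReal_sq_eq_enorm_sq, ← eLpNorm_two_sq] using key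

theorem lintegral_Ioi_sq_div_cube_le {g g' : ℝ → ℝ} (hg : ∀ r, HasDerivAt g (g' r) r)
    (hg' : Continuous g') (h0 : g 0 = 0) :
    ∫⁻ r in Ioi 0, ENNReal.ofReal (g r ^ 2 / r ^ 3)
      ≤ ∫⁻ r in Ioi 0, ENNReal.ofReal (g' r ^ 2 / r) := by
  calc ∫⁻ r in Ioi 0, ENNReal.ofReal (g r ^ 2 / r ^ 3)
      ≤ ∫⁻ r in Ioi 0,
          (∫⁻ s in Ioc 0 r, ENNReal.ofReal (g' s ^ 2)) * ENNReal.ofReal (1 / r ^ 2) := by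
        refine setLIntegral_mono' measurableSet_Ioi fun r (hr : 0 < r) => ?_
        calc ENNReal.ofReal (g r ^ 2 / r ^ 3)
            = ENNReal.ofReal (g r ^ 2) * ENNReal.ofReal (1 / r ^ 3) := by
              rw [← ENNReal.ofReal_mul (sq_nonneg _), mul_one_div]
          _ ≤ (∫⁻ s in Ioc 0 r, ENNReal.ofReal (g' s ^ 2)) * ENNReal.ofReal r
                * ENNReal.ofReal (1 / r ^ 3) := by
              gcongr
              exact ofReal_sq_le_lintegral_Ioc_mul hg hg' h0 hr.le
          _ = _ := by
              rw [mul_assoc, ← ENNReal.ofReal_mul hr.le]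
              congr 2
              field_simp
    _ = ∫⁻ s in Ioi 0, ENNReal.ofReal (g' s ^ 2) * ENNReal.ofReal (1 / s) :=
        lintegral_Ioi_lintegral_Ioc_mul_inv_sq (by fun_prop)
    _ = ∫⁻ r in Ioi 0, ENNReal.ofReal (g' r ^ 2 / r) := by
        simp_rw [← ENNReal.ofReal_mul (sq_nonneg _), mul_one_div]

lemma continuous_pr2 {ψ : ℝ × ℝ → ℝ} (hψ : ContDiff ℝ 1 ψ) : Continuous (pr2 ψ) :=
  (hψ.continuous_fderiv one_ne_zero).clm_apply continuous_const

lemma hasDerivAt_pr2 {ψ : ℝ × ℝ → ℝ} (hψ : ContDiff ℝ 1 ψ) (z r : ℝ) :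
    HasDerivAt (fun t => ψ (z, t)) (pr2 ψ (z, r)) r :=
  (hψ.differentiable one_ne_zero (z, r)).hasFDerivAt.comp_hasDerivAt r
    ((hasDerivAt_const r z).prodMk (hasDerivAt_id r))

lemma gradsq_eq_zero_of_notMem_tsupport {ψ : ℝ × ℝ → ℝ} {x : ℝ × ℝ} (hx : x ∉ tsupport ψ) :
    gradsq ψ x = 0 := by
  simp [gradsq, pz2, pr2, fderiv_of_notMem_tsupport ℝ hx]

lemma norm_fderiv_sq_le (ψ : ℝ × ℝ → ℝ) (x : ℝ × ℝ) :
    ‖fderiv ℝ ψ x‖ ^ 2 ≤ 2 * gradsq ψ x := by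
  set L := fderiv ℝ ψ x
  have hL : ‖L‖ ≤ |L (1, 0)| + |L (0, 1)| := by
    refine L.opNorm_le_bound (by positivity) fun v => ?_
    have hv : L v = v.1 * L (1, 0) + v.2 * L (0, 1) := by
      nth_rewrite 1 [show v = v.1 • ((1 : ℝ), (0 : ℝ)) + v.2 • ((0 : ℝ), (1 : ℝ)) by
        ext <;> simp]
      rw [map_add, map_smul, map_smul, smul_eq_mul, smul_eq_mul]
    rw [hv, Real.norm_eq_abs]
    calc |v.1 * L (1, 0) + v.2 * L (0, 1)|
        ≤ |v.1| * |L (1, 0)| + |v.2| * |L (0, 1)| := by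
          rw [← abs_mul, ← abs_mul]
          exact abs_add_le _ _
      _ ≤ ‖v‖ * |L (1, 0)| + ‖v‖ * |L (0, 1)| := by
          gcongr
          exacts [norm_fst_le v, norm_snd_le v]
      _ = (|L (1, 0)| + |L (0, 1)|) * ‖v‖ := by ring
  have hL2 := pow_le_pow_left₀ (norm_nonneg L) hL 2
  rw [gradsq, pz2, pr2]
  nlinarith [sq_abs (L (1, 0)), sq_abs (L (0, 1)), sq_nonneg (|L (1, 0)| - |L (0, 1)|)]

lemma isOpen_halfDisk (R : ℝ) : IsOpen (halfDisk R) :=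
  (isOpen_lt continuous_const continuous_snd).inter
    (isOpen_lt (by fun_prop : Continuous fun x : ℝ × ℝ => x.1 ^ 2 + x.2 ^ 2) continuous_const)

lemma abs_le_abs_of_mem_halfDisk {R : ℝ} {x : ℝ × ℝ} (hx : x ∈ halfDisk R) :
    |x.1| ≤ |R| ∧ |x.2| ≤ |R| :=
  ⟨sq_le_sq.1 (by linarith [sq_nonneg x.2, hx.2]),
    sq_le_sq.1 (by linarith [sq_nonneg x.1, hx.2])⟩

lemma isBounded_halfDisk (R : ℝ) : IsBounded (halfDisk R) :=
  (Metric.isBounded_closedBall (x := 0) (r := |R|)).subset fun x hx => by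
    rw [Metric.mem_closedBall, dist_zero_right, Prod.norm_def]
    exact max_le (abs_le_abs_of_mem_halfDisk hx).1 (abs_le_abs_of_mem_halfDisk hx).2

theorem lintegral_upperHalfPlane_sq_div_cube_le {ψ : ℝ × ℝ → ℝ} (hψ : ContDiff ℝ 1 ψ)
    (h0 : ∀ z, ψ (z, 0) = 0) :
    ∫⁻ x in univ ×ˢ Ioi 0, ENNReal.ofReal (ψ x ^ 2 / x.2 ^ 3)
      ≤ ∫⁻ x in univ ×ˢ Ioi 0, ENNReal.ofReal (pr2 ψ x ^ 2 / x.2) := by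
  have hψm : Measurable ψ := hψ.continuous.measurable
  have hpm : Measurable (pr2 ψ) := (continuous_pr2 hψ).measurable
  rw [Measure.volume_eq_prod, setLIntegral_prod _ (by fun_prop),
    setLIntegral_prod _ (by fun_prop), Measure.restrict_univ]
  exact lintegral_mono fun z => lintegral_Ioi_sq_div_cube_le (hasDerivAt_pr2 hψ z)
    ((continuous_pr2 hψ).comp (.prodMk_right z)) (h0 z)

theorem lintegral_halfDisk_sq_div_cube_le {R : ℝ} {ψ : ℝ × ℝ → ℝ} (hψ : ContDiff ℝ 1 ψ)
    (hsupp : tsupport ψ ⊆ halfDisk R) :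
    ∫⁻ x in halfDisk R, ENNReal.ofReal (ψ x ^ 2 / x.2 ^ 3)
      ≤ ∫⁻ x in halfDisk R, ENNReal.ofReal (gradsq ψ x / x.2) := by
  have hD : halfDisk R ⊆ univ ×ˢ Ioi 0 := fun x hx => ⟨trivial, hx.1⟩
  have h0 (z : ℝ) : ψ (z, 0) = 0 :=
    image_eq_zero_of_notMem_tsupport fun h => (hsupp h).1.ne rfl
  have hsupp' : (fun x => ENNReal.ofReal (gradsq ψ x / x.2)).support ⊆ halfDisk R := by
    refine fun x hx => hsupp (not_not.1 fun h => hx ?_)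
    simp [gradsq_eq_zero_of_notMem_tsupport h]
  calc ∫⁻ x in halfDisk R, ENNReal.ofReal (ψ x ^ 2 / x.2 ^ 3)
      ≤ ∫⁻ x in univ ×ˢ Ioi 0, ENNReal.ofReal (ψ x ^ 2 / x.2 ^ 3) := lintegral_mono_set hD
    _ ≤ ∫⁻ x in univ ×ˢ Ioi 0, ENNReal.ofReal (pr2 ψ x ^ 2 / x.2) :=
        lintegral_upperHalfPlane_sq_div_cube_le hψ h0
    _ ≤ ∫⁻ x in univ ×ˢ Ioi 0, ENNReal.ofReal (gradsq ψ x / x.2) := by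
        refine setLIntegral_mono' (MeasurableSet.univ.prod measurableSet_Ioi)
          fun x ⟨_, (hx : 0 < x.2)⟩ => ENNReal.ofReal_le_ofReal ?_
        gcongr
        exact le_add_of_nonneg_left (sq_nonneg _)
    _ = ∫⁻ x in halfDisk R, ENNReal.ofReal (gradsq ψ x / x.2) := by
        rw [setLIntegral_eq_of_support_subset hsupp', setLIntegral_eq_of_support_subset
          (hsupp'.trans hD)]

theorem exists_eLpNorm_le_mul_eLpNorm_fderiv_two {E : Type*} [NormedAddCommGroup E]
    [NormedSpace ℝ E] [MeasurableSpace E] [BorelSpace E] [FiniteDimensional ℝ E]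
    (μ : Measure E) [μ.IsAddHaarMeasure] (hE : finrank ℝ E = 2) {K : Set E} (hK : IsBounded K)
    {s : ℝ≥0} (hs : 2 ≤ s) :
    ∃ C : ℝ≥0, ∀ u : E → ℝ, ContDiff ℝ 1 u → u.support ⊆ K →
      eLpNorm u s μ ≤ C * eLpNorm (fderiv ℝ u) 2 μ := by
  have hs0 : (0 : ℝ) < s := by positivity
  have hs2 : (2 : ℝ) ≤ s := by exact_mod_cast hs
  -- `1/p = 1/2 + 1/s`: `s` is the Sobolev exponent of `p < 2` in dimension two
  set p : ℝ≥0 := 2 * s / (s + 2)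
  have hp : (p : ℝ)⁻¹ = 2⁻¹ + (s : ℝ)⁻¹ := by
    simp only [p, NNReal.coe_div, NNReal.coe_mul, NNReal.coe_add]
    field_simp
    push_cast
    ring
  have hp0 : (0 : ℝ) < p := by positivity
  have hp1 : 1 ≤ p := by
    have : (p : ℝ)⁻¹ ≤ 1 := by
      rw [hp]
      linarith [inv_anti₀ two_pos hs2]
    exact_mod_cast (inv_le_one₀ hp0).1 this
  have hp2 : (p : ℝ) < 2 :=
    (inv_lt_inv₀ two_pos hp0).1 (by rw [hp]; linarith [inv_pos.2 hs0])
  set K' := closure K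
  have hK' : μ K' ≠ ⊤ := hK.closure.measure_lt_top.ne
  set C₀ := eLpNormLESNormFDerivOfLeConst ℝ μ K p s
  refine ⟨C₀ * (μ K').toNNReal ^ (s : ℝ)⁻¹, fun u hu hsupp => ?_⟩
  have hsupp' : (fderiv ℝ u).support ⊆ K' :=
    (support_fderiv_subset ℝ).trans (closure_mono hsupp)
  calc eLpNorm u s μ
      ≤ C₀ * eLpNorm (fderiv ℝ u) p μ :=
        eLpNorm_le_eLpNorm_fderiv_of_le μ hu hsupp hp1 (by rw [hE]; exact_mod_cast hp2)
          (by rw [hE, NNReal.coe_inv, hp]; push_cast; linarith) hK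
    _ = C₀ * eLpNorm (fderiv ℝ u) p (μ.restrict K') := by
        rw [eLpNorm_restrict_eq_of_support_subset (ε := E →L[ℝ] ℝ) hsupp']
    _ ≤ C₀ * (eLpNorm (fderiv ℝ u) 2 (μ.restrict K') * μ K' ^ (s : ℝ)⁻¹) := by
        have hmeas :=
          (hu.continuous_fderiv one_ne_zero).aestronglyMeasurable (μ := μ.restrict K')
        have := eLpNorm_le_eLpNorm_mul_rpow_measure_univ
          (show (p : ℝ≥0∞) ≤ 2 by exact_mod_cast hp2.le) hmeas
        rw [Measure.restrict_apply_univ, ENNReal.coe_toReal, one_div, hp] at this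
        norm_num at this
        gcongr
    _ ≤ (C₀ * (μ K').toNNReal ^ (s : ℝ)⁻¹ : ℝ≥0) * eLpNorm (fderiv ℝ u) 2 μ := by
        rw [ENNReal.coe_mul, ENNReal.coe_rpow_of_nonneg _ (by positivity),
          ENNReal.coe_toNNReal hK', mul_assoc, mul_comm (eLpNorm _ _ _)]
        gcongr
        exact Measure.restrict_le_self

lemma lintegral_enorm_fderiv_sq_le {R : ℝ} (hR : 0 ≤ R) {ψ : ℝ × ℝ → ℝ}
    (hsupp : tsupport ψ ⊆ halfDisk R) :
    ∫⁻ x, ‖fderiv ℝ ψ x‖ₑ ^ 2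
      ≤ ENNReal.ofReal (2 * R) * ∫⁻ x in halfDisk R, ENNReal.ofReal (gradsq ψ x / x.2) := by
  have hsupp' : (fun x => ‖fderiv ℝ ψ x‖ₑ ^ 2).support ⊆ halfDisk R := fun x hx => by
    refine hsupp (support_fderiv_subset ℝ fun h => hx ?_)
    dsimp only
    rw [h, ← ofReal_norm, norm_zero, ENNReal.ofReal_zero, zero_pow two_ne_zero]
  rw [← setLIntegral_eq_of_support_subset hsupp',
    ← lintegral_const_mul' _ _ ENNReal.ofReal_ne_top]
  refine setLIntegral_mono' (isOpen_halfDisk R).measurableSet fun x hx => ?_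
  have hr : x.2 ≤ R := by
    simpa [abs_of_pos hx.1, abs_of_nonneg hR] using (abs_le_abs_of_mem_halfDisk hx).2
  have hg : 0 ≤ gradsq ψ x := by unfold gradsq; positivity
  rw [← ofReal_norm, ← ENNReal.ofReal_pow (norm_nonneg _),
    ← ENNReal.ofReal_mul (by positivity)]
  refine ENNReal.ofReal_le_ofReal ((norm_fderiv_sq_le ψ x).trans ?_)
  rw [mul_div_assoc', le_div_iff₀ hx.1]
  nlinarith

lemma exists_lintegral_rpow_le_halfDisk {R : ℝ} (hR : 0 ≤ R) {s : ℝ≥0} (hs : 2 ≤ s) :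
    ∃ C : ℝ≥0, ∀ ψ : ℝ × ℝ → ℝ, ContDiff ℝ 1 ψ → tsupport ψ ⊆ halfDisk R →
      ∫⁻ x, ‖ψ x‖ₑ ^ (s : ℝ)
        ≤ C * (∫⁻ x in halfDisk R, ENNReal.ofReal (gradsq ψ x / x.2)) ^ ((s : ℝ) / 2) := by
  obtain ⟨C, hC⟩ := exists_eLpNorm_le_mul_eLpNorm_fderiv_two volume
    (by simp : finrank ℝ (ℝ × ℝ) = 2) (isBounded_halfDisk R) hs
  refine ⟨C ^ (s : ℝ) * (2 * R).toNNReal ^ ((s : ℝ) / 2), fun ψ hψ hsupp => ?_⟩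
  have hs0 : (0 : ℝ) ≤ s := s.2
  calc ∫⁻ x, ‖ψ x‖ₑ ^ (s : ℝ)
      = eLpNorm ψ s volume ^ (s : ℝ) :=
        (eLpNorm_nnreal_pow_eq_lintegral (by positivity)).symm
    _ ≤ (C * eLpNorm (fderiv ℝ ψ) 2 volume) ^ (s : ℝ) :=
        ENNReal.rpow_le_rpow (hC ψ hψ ((subset_tsupport ψ).trans hsupp)) hs0
    _ = C ^ (s : ℝ) * (eLpNorm (fderiv ℝ ψ) 2 volume ^ 2) ^ ((s : ℝ) / 2) := by
        rw [ENNReal.mul_rpow_of_nonneg _ _ hs0, ← ENNReal.rpow_natCast, ← ENNReal.rpow_mul]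
        norm_num [mul_div_cancel₀]
    _ ≤ C ^ (s : ℝ) * (ENNReal.ofReal (2 * R)
          * ∫⁻ x in halfDisk R, ENNReal.ofReal (gradsq ψ x / x.2)) ^ ((s : ℝ) / 2) := by
        rw [eLpNorm_two_sq]
        gcongr
        exact lintegral_enorm_fderiv_sq_le hR hsupp
    _ = _ := by
        rw [ENNReal.mul_rpow_of_nonneg _ _ (by positivity), ENNReal.coe_mul,
          ENNReal.coe_rpow_of_nonneg _ hs0, ENNReal.coe_rpow_of_nonneg _ (by positivity),
          mul_assoc]
        rfl

lemma posPart_rpow_mul_div_nonneg {t r γ q : ℝ} (hr : 0 < r) (hγ : 0 ≤ γ) (hq : 1 < 2 * q) :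
    0 ≤ max (t - r ^ 2 - γ) 0 ^ (2 * q - 1) * t / r := by
  rcases le_or_gt (t - r ^ 2 - γ) 0 with hm | hm
  · rw [max_eq_right hm, Real.zero_rpow (by linarith), zero_mul, zero_div]
  · have ht : 0 < t := by nlinarith
    positivity

lemma posPart_rpow_mul_div_le {t r γ q : ℝ} (hr : 0 < r) (hγ : 0 < γ) (hq : 1 < 2 * q) :
    max (t - r ^ 2 - γ) 0 ^ (2 * q - 1) * t / r
      ≤ (γ ^ 4)⁻¹ * ((t ^ 2 / r ^ 3) ^ (1 / 3 : ℝ) * (|t| ^ (3 * q + 5)) ^ (2 / 3 : ℝ)) := by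
  rcases le_or_gt (t - r ^ 2 - γ) 0 with hm | hm
  · rw [max_eq_right hm, Real.zero_rpow (by linarith), zero_mul, zero_div]
    positivity
  have hγt : γ < t := by nlinarith
  have ht : 0 < t := hγ.trans hγt
  have hRHS : (t ^ 2 / r ^ 3) ^ (1 / 3 : ℝ) * (|t| ^ (3 * q + 5)) ^ (2 / 3 : ℝ)
      = t ^ (2 * q + 4) / r := by
    rw [Real.div_rpow (by positivity) (by positivity), abs_of_pos ht, ← Real.rpow_natCast t 2,
      ← Real.rpow_natCast r 3, ← Real.rpow_mul ht.le, ← Real.rpow_mul hr.le,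
      ← Real.rpow_mul ht.le, div_mul_eq_mul_div, ← Real.rpow_add ht]
    norm_num
    ring_nf
  rw [max_eq_left hm.le, hRHS]
  calc (t - r ^ 2 - γ) ^ (2 * q - 1) * t / r
      ≤ t ^ (2 * q - 1) * t / r := by
        gcongr
        linarith [sq_nonneg r]
    _ = (γ ^ 4)⁻¹ * (γ ^ 4 * t ^ (2 * q)) / r := by
        rw [inv_mul_cancel_left₀ (by positivity), ← Real.rpow_add_one ht.ne']
        ring_nf
    _ ≤ (γ ^ 4)⁻¹ * (t ^ (2 * q + 4) / r) := by
        rw [mul_div_assoc, Real.rpow_add ht, mul_comm (γ ^ 4)]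
        gcongr
        norm_cast
        gcongr

theorem exists_lintegral_halfDisk_nonlinear_le {R : ℝ} (hR : 0 ≤ R) {q γ : ℝ} (hq : 1 < 2 * q)
    (hγ : 0 < γ) :
    ∃ C : ℝ≥0, ∀ ψ : ℝ × ℝ → ℝ, ContDiff ℝ 1 ψ → tsupport ψ ⊆ halfDisk R →
      ∫⁻ x in halfDisk R, ENNReal.ofReal (max (ψ x - x.2 ^ 2 - γ) 0 ^ (2 * q - 1) * ψ x / x.2)
        ≤ C * (∫⁻ x in halfDisk R, ENNReal.ofReal (gradsq ψ x / x.2)) ^ (q + 2) := by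
  set s : ℝ≥0 := ⟨3 * q + 5, by linarith⟩
  have hs : (s : ℝ) = 3 * q + 5 := rfl
  obtain ⟨C, hC⟩ := exists_lintegral_rpow_le_halfDisk hR (s := s)
    (by rw [← NNReal.coe_le_coe, hs]; norm_num; linarith)
  refine ⟨(γ ^ 4)⁻¹.toNNReal * C ^ (2 / 3 : ℝ), fun ψ hψ hsupp => ?_⟩
  have hψm : Measurable ψ := hψ.continuous.measurable
  set I := ∫⁻ x in halfDisk R, ENNReal.ofReal (gradsq ψ x / x.2)
  have hpt : ∀ x ∈ halfDisk R,
      ENNReal.ofReal (max (ψ x - x.2 ^ 2 - γ) 0 ^ (2 * q - 1) * ψ x / x.2)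
        ≤ ENNReal.ofReal (γ ^ 4)⁻¹ * (ENNReal.ofReal (ψ x ^ 2 / x.2 ^ 3) ^ (1 / 3 : ℝ)
          * (‖ψ x‖ₑ ^ (s : ℝ)) ^ (2 / 3 : ℝ)) := by
    intro x hx
    have h2 : 0 < x.2 := hx.1
    refine (ENNReal.ofReal_le_ofReal (posPart_rpow_mul_div_le hx.1 hγ hq)).trans_eq ?_
    rw [ENNReal.ofReal_mul (by positivity), ENNReal.ofReal_mul (by positivity),
      Real.enorm_eq_ofReal_abs, ENNReal.ofReal_rpow_of_nonneg (abs_nonneg _) s.coe_nonneg, hs,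
      ENNReal.ofReal_rpow_of_nonneg (by positivity) (by norm_num : (0 : ℝ) ≤ 1 / 3),
      ENNReal.ofReal_rpow_of_nonneg (by positivity) (by norm_num : (0 : ℝ) ≤ 2 / 3)]
  calc ∫⁻ x in halfDisk R, ENNReal.ofReal (max (ψ x - x.2 ^ 2 - γ) 0 ^ (2 * q - 1) * ψ x / x.2)
      ≤ ∫⁻ x in halfDisk R, ENNReal.ofReal (γ ^ 4)⁻¹ * (ENNReal.ofReal (ψ x ^ 2 / x.2 ^ 3)
          ^ (1 / 3 : ℝ) * (‖ψ x‖ₑ ^ (s : ℝ)) ^ (2 / 3 : ℝ)) :=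
        setLIntegral_mono' (isOpen_halfDisk R).measurableSet hpt
    _ = ENNReal.ofReal (γ ^ 4)⁻¹ * ∫⁻ x in halfDisk R, ENNReal.ofReal (ψ x ^ 2 / x.2 ^ 3)
          ^ (1 / 3 : ℝ) * (‖ψ x‖ₑ ^ (s : ℝ)) ^ (2 / 3 : ℝ) :=
        lintegral_const_mul' _ _ ENNReal.ofReal_ne_top
    _ ≤ ENNReal.ofReal (γ ^ 4)⁻¹ * ((∫⁻ x in halfDisk R, ENNReal.ofReal (ψ x ^ 2 / x.2 ^ 3))
          ^ (1 / 3 : ℝ) * (∫⁻ x in halfDisk R, ‖ψ x‖ₑ ^ (s : ℝ)) ^ (2 / 3 : ℝ)) := by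
        gcongr
        exact ENNReal.lintegral_mul_norm_pow_le (by fun_prop) (by fun_prop) (by norm_num)
          (by norm_num) (by norm_num)
    _ ≤ ENNReal.ofReal (γ ^ 4)⁻¹
          * (I ^ (1 / 3 : ℝ) * (C * I ^ ((s : ℝ) / 2)) ^ (2 / 3 : ℝ)) := by
        gcongr
        · exact lintegral_halfDisk_sq_div_cube_le hψ hsupp
        · exact setLIntegral_le_lintegral _ _ |>.trans (hC ψ hψ hsupp)
    _ = _ := by
        rw [ENNReal.mul_rpow_of_nonneg _ _ (by norm_num), ← ENNReal.rpow_mul,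
          mul_left_comm _ (C ^ _ : ℝ≥0∞),
          ← ENNReal.rpow_add_of_nonneg _ _ (by norm_num) (by positivity), hs, ENNReal.coe_mul,
          ENNReal.coe_rpow_of_nonneg _ (by norm_num), ← mul_assoc]
        congr 2
        ring

lemma inv_rpow_inv_le_of_le_mul_rpow {a c e : ℝ} (ha : 0 < a) (he : 0 < e)
    (h : a ≤ c * a ^ (1 + e)) : c⁻¹ ^ e⁻¹ ≤ a := by
  rw [Real.rpow_add ha, Real.rpow_one, mul_left_comm] at h
  have hae : 0 < a ^ e := Real.rpow_pos_of_pos ha e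
  have h1 : 1 ≤ c * a ^ e := le_of_mul_le_mul_left (by linarith) ha
  have hc : 0 < c := pos_of_mul_pos_left (by linarith) hae.le
  calc c⁻¹ ^ e⁻¹ ≤ (a ^ e) ^ e⁻¹ :=
        Real.rpow_le_rpow (by positivity) ((inv_le_iff_one_le_mul₀' hc).2 h1) (by positivity)
    _ = a := by rw [← Real.rpow_mul ha.le, mul_inv_cancel₀ he.ne', Real.rpow_one]

lemma Hnormsq_eq_toReal_lintegral {D : Set (ℝ × ℝ)} (hD : MeasurableSet D)
    (hD' : ∀ x ∈ D, 0 < x.2) (ψ : ℝ × ℝ → ℝ) :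
    Hnormsq D ψ = 2 * π ^ 2 * (∫⁻ x in D, ENNReal.ofReal (gradsq ψ x / x.2)).toReal := by
  have hm : Measurable (gradsq ψ) :=
    ((measurable_fderiv_apply_const ℝ ψ _).pow_const 2).add
      ((measurable_fderiv_apply_const ℝ ψ _).pow_const 2)
  rw [Hnormsq, integral_eq_lintegral_of_nonneg_ae ((ae_restrict_iff' hD).2 (.of_forall
    fun x hx => div_nonneg (by unfold gradsq; positivity) (hD' x hx).le))
    (hm.div measurable_snd).aestronglyMeasurable]

lemma integral_posPart_rpow_mul_div_eq_toReal_lintegral {D : Set (ℝ × ℝ)}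
    (hD : MeasurableSet D) (hD' : ∀ x ∈ D, 0 < x.2) {ψ : ℝ × ℝ → ℝ} (hψ : Measurable ψ)
    {q γ : ℝ} (hq : 1 < 2 * q) (hγ : 0 ≤ γ) :
    ∫ x in D, max (ψ x - x.2 ^ 2 - γ) 0 ^ (2 * q - 1) * ψ x / x.2
      = (∫⁻ x in D,
          ENNReal.ofReal (max (ψ x - x.2 ^ 2 - γ) 0 ^ (2 * q - 1) * ψ x / x.2)).toReal :=
  integral_eq_lintegral_of_nonneg_ae ((ae_restrict_iff' hD).2 (.of_forall
    fun x hx => posPart_rpow_mul_div_nonneg (hD' x hx) hγ hq))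
    (Measurable.aestronglyMeasurable (by fun_prop))

/-- The infimum of the `H`-norm over the Nehari manifold
`N = {ψ ∈ H : ψ ≠ 0, I'[ψ]ψ = 0}` is positive. -/
theorem stmt11 (R q lam gam : ℝ) (hR : 0 < R) (hq : 1 < q) (hlam : 0 < lam)
    (hgam : 0 < gam) :
    ∃ ε > (0 : ℝ), ∀ ψ : ℝ × ℝ → ℝ, Adm (halfDisk R) ψ →
      Hnormsq (halfDisk R) ψ ≠ 0 → IprimeSelf (halfDisk R) q lam gam ψ = 0 →
      ε ≤ Real.sqrt (Hnormsq (halfDisk R) ψ) := by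
  obtain ⟨C, hC⟩ := exists_lintegral_halfDisk_nonlinear_le hR.le (q := q) (by linarith) hgam
  refine ⟨√(2 * π ^ 2 * (lam * (C + 1))⁻¹ ^ (q + 1)⁻¹), by positivity, ?_⟩
  rintro ψ ⟨hψ, -, hsupp⟩ hne hN
  have hψ1 : ContDiff ℝ 1 ψ := hψ.of_le (by exact_mod_cast le_top)
  have hD := (isOpen_halfDisk R).measurableSet
  have hD' (x : ℝ × ℝ) (hx : x ∈ halfDisk R) : 0 < x.2 := hx.1
  rw [IprimeSelf, integral_posPart_rpow_mul_div_eq_toReal_lintegral hD hD'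
    hψ1.continuous.measurable (by linarith) hgam.le] at hN
  rw [Hnormsq_eq_toReal_lintegral hD hD'] at hN hne ⊢
  set I := ∫⁻ x in halfDisk R, ENNReal.ofReal (gradsq ψ x / x.2)
  set N := ∫⁻ x in halfDisk R,
    ENNReal.ofReal (max (ψ x - x.2 ^ 2 - gam) 0 ^ (2 * q - 1) * ψ x / x.2)
  have hI : 0 < I.toReal := ENNReal.toReal_nonneg.lt_of_ne' fun h => hne (by rw [h, mul_zero])
  have hNehari : I.toReal = lam * N.toReal :=
    (mul_right_inj' (by positivity : 2 * π ^ 2 ≠ 0)).1 (by linarith)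
  have hN : N.toReal ≤ C * I.toReal ^ (q + 2) := by
    have hItop : I ≠ ⊤ := (ENNReal.toReal_pos_iff.1 hI).2.ne
    simpa [ENNReal.toReal_rpow] using ENNReal.toReal_mono (by finiteness) (hC ψ hψ1 hsupp)
  suffices (lam * (C + 1))⁻¹ ^ (q + 1)⁻¹ ≤ I.toReal from Real.sqrt_le_sqrt (by gcongr)
  refine inv_rpow_inv_le_of_le_mul_rpow hI (by linarith) ?_
  calc I.toReal = lam * N.toReal := hNehari
    _ ≤ lam * ((C + 1) * I.toReal ^ (q + 2)) := by
        gcongr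
        nlinarith [Real.rpow_nonneg hI.le (q + 2)]
    _ = lam * (C + 1) * I.toReal ^ (1 + (q + 1)) := by ring_nf
end
end

section
/- If ψ ∈ N minimizes I over the Nehari manifold N, its Steiner symmetrization ψ* in the z-variable also belongs to N and I[ψ*] = I[ψ]. In particular there exists a Steiner-symmetric ground state. -/
open Real MeasureTheory Set Filter

noncomputable section

/-!
The nonlinear integrals `∫ (φ - r² - γ)₊^{2q} r⁻¹` and `∫ (φ - r² - γ)₊^{2q-1} φ r⁻¹` depend only on
the distribution functions of the `z`-slices of `φ` (layer cake on each slice, then Fubini), so they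
agree at `ψ` and `ψ*`. Hence `I'[ψ*]ψ* = ‖ψ*‖² - ‖ψ‖² ≤ 0`. If this were negative, then, since
`I'[εψ*]εψ* = ε²‖ψ*‖² ≥ 0` as soon as `εψ*` lies below the obstacle `c = r² + γ`, the intermediate
value theorem would put some `tψ*` with `0 < t < 1` on `N`. On `N` we have `I = π²λ ∫ n(φ) r⁻¹`
with `n(s) = (s - c)₊^{2q-1} s - (s - c)₊^{2q} / q`, and `n(ts) ≤ n(s)`, strictly where `s > c`;
so `I[tψ*] < π²λ ∫ n(ψ*) r⁻¹ = π²λ ∫ n(ψ) r⁻¹ = I[ψ]`, contradicting minimality. Finally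
`‖ψ*‖ ≠ 0`, since a test function with vanishing Dirichlet integral is zero.
-/

open scoped ENNReal Topology

def SliceEquimeasurable (D : Set (ℝ × ℝ)) (φ ψ : ℝ × ℝ → ℝ) : Prop :=
  ∀ r t : ℝ, 0 < t →
    volume {z : ℝ | ((z, r) : ℝ × ℝ) ∈ D ∧ t ≤ φ (z, r)}
      = volume {z : ℝ | ((z, r) : ℝ × ℝ) ∈ D ∧ t ≤ ψ (z, r)}

def jIntegral (D : Set (ℝ × ℝ)) (q gam : ℝ) (φ : ℝ × ℝ → ℝ) : ℝ :=
  ∫ x in D, (max (φ x - x.2 ^ 2 - gam) 0) ^ (2 * q) / x.2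

def nehariIntegral (D : Set (ℝ × ℝ)) (q gam : ℝ) (φ : ℝ × ℝ → ℝ) : ℝ :=
  ∫ x in D, (max (φ x - x.2 ^ 2 - gam) 0) ^ (2 * q - 1) * φ x / x.2

section LayerCake

variable {α : Type*} [MeasurableSpace α] {μ : Measure α} {f g : α → ℝ} {c p : ℝ}

theorem lintegral_max_sub_rpow (hf : Measurable f) (hp : 0 < p) :
    ∫⁻ a, ENNReal.ofReal (max (f a - c) 0 ^ p) ∂μ
      = ENNReal.ofReal p *
        ∫⁻ t in Ioi 0, μ {a | t ≤ max (f a - c) 0} * ENNReal.ofReal (t ^ (p - 1)) := by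
  have hprim : ∀ s, ∫ t in (0 : ℝ)..s, t ^ (p - 1) = s ^ p / p := fun s => by
    rw [integral_rpow (Or.inl (by linarith)), sub_add_cancel,
      Real.zero_rpow hp.ne', sub_zero]
  have hcake := lintegral_comp_eq_lintegral_meas_le_mul μ (f := fun a => max (f a - c) 0)
    (g := fun t => t ^ (p - 1)) (Eventually.of_forall fun a => le_max_right _ _)
    ((hf.sub_const c).max measurable_const).aemeasurable
    (fun t _ => intervalIntegral.intervalIntegrable_rpow' (by linarith))
    (ae_restrict_of_forall_mem measurableSet_Ioi fun t ht => Real.rpow_nonneg (le_of_lt ht) _)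
  simp only [hprim] at hcake
  rw [← hcake, ← lintegral_const_mul' _ _ ENNReal.ofReal_ne_top]
  refine lintegral_congr fun a => ?_
  rw [← ENNReal.ofReal_mul hp.le, mul_div_cancel₀ _ hp.ne']

theorem lintegral_max_sub_rpow_eq_of_meas_le_eq (hf : Measurable f) (hg : Measurable g)
    (hc : 0 ≤ c) (hp : 0 < p) (h : ∀ t, 0 < t → μ {a | t ≤ f a} = μ {a | t ≤ g a}) :
    ∫⁻ a, ENNReal.ofReal (max (f a - c) 0 ^ p) ∂μ
      = ∫⁻ a, ENNReal.ofReal (max (g a - c) 0 ^ p) ∂μ := by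
  have hlevel : ∀ u : α → ℝ, ∀ t, 0 < t → {a | t ≤ max (u a - c) 0} = {a | t + c ≤ u a} :=
    fun u t ht => by ext a; simp [not_le.2 ht, le_sub_iff_add_le]
  rw [lintegral_max_sub_rpow hf hp, lintegral_max_sub_rpow hg hp]
  congr 1
  refine setLIntegral_congr_fun measurableSet_Ioi fun t ht => ?_
  rw [hlevel f t ht, hlevel g t ht, h (t + c) (by linarith [mem_Ioi.1 ht])]

end LayerCake

theorem setLIntegral_eq_lintegral_slices {D : Set (ℝ × ℝ)} (hD : MeasurableSet D)
    {w : ℝ × ℝ → ℝ≥0∞} (hw : Measurable w) :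
    ∫⁻ x in D, w x = ∫⁻ r, ∫⁻ z in {z : ℝ | (z, r) ∈ D}, w (z, r) := by
  rw [← lintegral_indicator hD, Measure.volume_eq_prod,
    lintegral_prod_symm _ (hw.indicator hD).aemeasurable]
  refine lintegral_congr fun r => ?_
  have hslice : MeasurableSet {z : ℝ | (z, r) ∈ D} := hD.preimage measurable_prodMk_right
  exact lintegral_indicator (μ := volume) (f := fun z => w (z, r)) hslice

namespace SliceEquimeasurable

variable {D : Set (ℝ × ℝ)} {φ ψ : ℝ × ℝ → ℝ}

theorem setLIntegral_eq (h : SliceEquimeasurable D φ ψ) (hD : MeasurableSet D)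
    (hφ : Measurable φ) (hψ : Measurable ψ) {c : ℝ → ℝ} (hc : Measurable c)
    (hc0 : ∀ r, 0 ≤ c r) {w : ℝ → ℝ≥0∞} (hw : Measurable w) {p : ℝ} (hp : 0 < p) :
    ∫⁻ x in D, ENNReal.ofReal (max (φ x - c x.2) 0 ^ p) * w x.2
      = ∫⁻ x in D, ENNReal.ofReal (max (ψ x - c x.2) 0 ^ p) * w x.2 := by
  have hmeas : ∀ u : ℝ × ℝ → ℝ, Measurable u →
      Measurable fun x : ℝ × ℝ => ENNReal.ofReal (max (u x - c x.2) 0 ^ p) * w x.2 :=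
    fun u hu => by fun_prop
  rw [setLIntegral_eq_lintegral_slices hD (hmeas φ hφ),
    setLIntegral_eq_lintegral_slices hD (hmeas ψ hψ)]
  refine lintegral_congr fun r => ?_
  have hslice : MeasurableSet {z : ℝ | (z, r) ∈ D} := hD.preimage measurable_prodMk_right
  have hmeas_slice : ∀ u : ℝ × ℝ → ℝ, Measurable u →
      Measurable fun z : ℝ => ENNReal.ofReal (max (u (z, r) - c r) 0 ^ p) :=
    fun u hu => by fun_prop
  dsimp only
  rw [lintegral_mul_const _ (hmeas_slice φ hφ), lintegral_mul_const _ (hmeas_slice ψ hψ)]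
  congr 1
  refine lintegral_max_sub_rpow_eq_of_meas_le_eq (by fun_prop) (by fun_prop) (hc0 r) hp
    fun t ht => ?_
  rw [Measure.restrict_apply' hslice, Measure.restrict_apply' hslice, inter_comm,
    inter_comm _ {z | (z, r) ∈ D}]
  exact h r t ht

end SliceEquimeasurable

theorem max_sub_rpow_mul_self {q : ℝ} (hq : 1 / 2 < q) (c s : ℝ) :
    max (s - c) 0 ^ (2 * q - 1) * s
      = max (s - c) 0 ^ (2 * q) + c * max (s - c) 0 ^ (2 * q - 1) := by
  rcases le_or_gt s c with hsc | hsc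
  · rw [max_eq_right (by linarith), Real.zero_rpow (by linarith), Real.zero_rpow (by linarith)]
    ring
  · have hpow : (s - c) ^ (2 * q) = (s - c) ^ (2 * q - 1) * (s - c) := by
      rw [← Real.rpow_add_one (by linarith), sub_add_cancel]
    rw [max_eq_left (by linarith), hpow]
    ring

section ObstacleIntegrals

variable {D : Set (ℝ × ℝ)} {q gam : ℝ} {φ ψ : ℝ × ℝ → ℝ}

theorem jIntegral_eq_toReal_lintegral (hD : MeasurableSet D) (hD0 : ∀ x ∈ D, 0 < x.2)
    (hφ : Measurable φ) :
    jIntegral D q gam φ = (∫⁻ x in D, ENNReal.ofReal (max (φ x - (x.2 ^ 2 + gam)) 0 ^ (2 * q))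
      * ENNReal.ofReal x.2⁻¹).toReal := by
  rw [jIntegral, integral_eq_lintegral_of_nonneg_ae
    (ae_restrict_of_forall_mem hD fun x hx => div_nonneg (by positivity) (hD0 x hx).le)
    (Measurable.aestronglyMeasurable (by fun_prop))]
  congr 1
  refine lintegral_congr fun x => ?_
  rw [← ENNReal.ofReal_mul (by positivity), sub_sub, div_eq_mul_inv]

-- Writing `s = (s - c) + c` splits the integrand into two terms of the form `(φ - c)₊ ^ p · w(r)`.
theorem nehariIntegral_eq_toReal_lintegral (hD : MeasurableSet D) (hD0 : ∀ x ∈ D, 0 < x.2)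
    (hq : 1 / 2 < q) (hgam : 0 ≤ gam) (hφ : Measurable φ) :
    nehariIntegral D q gam φ =
      (∫⁻ x in D, ENNReal.ofReal (max (φ x - (x.2 ^ 2 + gam)) 0 ^ (2 * q))
          * ENNReal.ofReal x.2⁻¹
        + ENNReal.ofReal (max (φ x - (x.2 ^ 2 + gam)) 0 ^ (2 * q - 1))
          * ENNReal.ofReal ((x.2 ^ 2 + gam) * x.2⁻¹)).toReal := by
  have hsplit : ∀ x : ℝ × ℝ, max (φ x - x.2 ^ 2 - gam) 0 ^ (2 * q - 1) * φ x / x.2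
      = max (φ x - (x.2 ^ 2 + gam)) 0 ^ (2 * q) * x.2⁻¹
        + max (φ x - (x.2 ^ 2 + gam)) 0 ^ (2 * q - 1) * ((x.2 ^ 2 + gam) * x.2⁻¹) := fun x => by
    rw [sub_sub, max_sub_rpow_mul_self hq]
    ring
  rw [nehariIntegral, integral_eq_lintegral_of_nonneg_ae
    (ae_restrict_of_forall_mem hD fun x hx => by
      have := (hD0 x hx).le
      rw [hsplit]
      positivity)
    (Measurable.aestronglyMeasurable (by fun_prop))]
  congr 1
  refine setLIntegral_congr_fun hD fun x hx => ?_
  have := (hD0 x hx).le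
  rw [hsplit, ENNReal.ofReal_add (by positivity) (by positivity),
    ENNReal.ofReal_mul (by positivity), ENNReal.ofReal_mul (by positivity)]

theorem SliceEquimeasurable.jIntegral_eq (h : SliceEquimeasurable D φ ψ)
    (hD : MeasurableSet D) (hD0 : ∀ x ∈ D, 0 < x.2) (hq : 0 < q) (hgam : 0 ≤ gam)
    (hφ : Measurable φ) (hψ : Measurable ψ) :
    jIntegral D q gam φ = jIntegral D q gam ψ := by
  rw [jIntegral_eq_toReal_lintegral hD hD0 hφ, jIntegral_eq_toReal_lintegral hD hD0 hψ,
    h.setLIntegral_eq hD hφ hψ (c := fun r => r ^ 2 + gam) (by fun_prop) (fun r => by positivity)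
      (w := fun r => ENNReal.ofReal r⁻¹) (by fun_prop) (by linarith)]

theorem SliceEquimeasurable.nehariIntegral_eq (h : SliceEquimeasurable D φ ψ)
    (hD : MeasurableSet D) (hD0 : ∀ x ∈ D, 0 < x.2) (hq : 1 / 2 < q) (hgam : 0 ≤ gam)
    (hφ : Measurable φ) (hψ : Measurable ψ) :
    nehariIntegral D q gam φ = nehariIntegral D q gam ψ := by
  have hobst : Measurable fun r : ℝ => r ^ 2 + gam := by fun_prop
  have hobst0 : ∀ r : ℝ, 0 ≤ r ^ 2 + gam := fun r => by positivity
  rw [nehariIntegral_eq_toReal_lintegral hD hD0 hq hgam hφ,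
    nehariIntegral_eq_toReal_lintegral hD hD0 hq hgam hψ,
    lintegral_add_left (by fun_prop), lintegral_add_left (by fun_prop),
    h.setLIntegral_eq hD hφ hψ hobst hobst0 (w := fun r => ENNReal.ofReal r⁻¹) (by fun_prop)
      (by linarith),
    h.setLIntegral_eq hD hφ hψ hobst hobst0 (w := fun r => ENNReal.ofReal ((r ^ 2 + gam) * r⁻¹))
      (by fun_prop) (by linarith)]

end ObstacleIntegrals

theorem Continuous.div_of_eventually_zero {Y : Type*} [TopologicalSpace Y] {f g : Y → ℝ}
    (hf : Continuous f) (hg : Continuous g) (h : ∀ y, g y = 0 → f =ᶠ[𝓝 y] 0) :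
    Continuous fun y => f y / g y := by
  refine continuous_iff_continuousAt.2 fun y => ?_
  by_cases hy : g y = 0
  · refine (continuousAt_const (y := (0 : ℝ))).congr ?_
    filter_upwards [h y hy] with y' hy'
    simp [hy']
  · exact hf.continuousAt.div hg.continuousAt hy

section WeightedIntegrands

variable {F : ℝ × ℝ → ℝ} {Φ : ℝ → ℝ × ℝ → ℝ} {u : ℝ × ℝ → ℝ}

theorem continuous_div_snd (hF : Continuous F) (hF0 : ∀ x ∈ tsupport F, 0 < x.2) :
    Continuous fun x : ℝ × ℝ => F x / x.2 :=
  hF.div_of_eventually_zero continuous_snd fun x hx =>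
    notMem_tsupport_iff_eventuallyEq.1 fun hxF => (hF0 x hxF).ne' hx

theorem HasCompactSupport.div_snd (hFc : HasCompactSupport F) :
    HasCompactSupport fun x : ℝ × ℝ => F x / x.2 :=
  hFc.mono fun x hx hFx => hx (by simp [hFx])

theorem tsupport_apply_comp_subset (hΦ0 : ∀ x, Φ 0 x = 0) (u : ℝ × ℝ → ℝ) :
    tsupport (fun x => Φ (u x) x) ⊆ tsupport u :=
  closure_mono fun x hx hux => hx (by simp [hux, hΦ0])

theorem continuous_apply_comp_div_snd (hΦ : Continuous Φ.uncurry) (hΦ0 : ∀ x, Φ 0 x = 0)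
    (hu : Continuous u) (hu0 : ∀ x ∈ tsupport u, 0 < x.2) :
    Continuous fun x => Φ (u x) x / x.2 :=
  continuous_div_snd (hΦ.comp (hu.prodMk continuous_id))
    fun x hx => hu0 x (tsupport_apply_comp_subset hΦ0 u hx)

theorem HasCompactSupport.apply_comp_div_snd (huc : HasCompactSupport u)
    (hΦ0 : ∀ x, Φ 0 x = 0) : HasCompactSupport fun x => Φ (u x) x / x.2 :=
  HasCompactSupport.div_snd (F := fun x => Φ (u x) x)
    (huc.mono' ((subset_tsupport _).trans (tsupport_apply_comp_subset hΦ0 u)))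

theorem integrable_apply_comp_div_snd (hΦ : Continuous Φ.uncurry) (hΦ0 : ∀ x, Φ 0 x = 0)
    (hu : Continuous u) (huc : HasCompactSupport u) (hu0 : ∀ x ∈ tsupport u, 0 < x.2) :
    Integrable fun x => Φ (u x) x / x.2 :=
  (continuous_apply_comp_div_snd hΦ hΦ0 hu hu0).integrable_of_hasCompactSupport
    (huc.apply_comp_div_snd hΦ0)

theorem continuous_setIntegral_apply_mul_div_snd (hΦ : Continuous Φ.uncurry) (hΦ0 : ∀ x, Φ 0 x = 0)
    (hu : Continuous u) (huc : HasCompactSupport u) {D : Set (ℝ × ℝ)} (huD : tsupport u ⊆ D)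
    (hD0 : ∀ x ∈ D, 0 < x.2) :
    Continuous fun t : ℝ => ∫ x in D, Φ (t * u x) x / x.2 := by
  have hvanish : ∀ t, ∀ x ∉ tsupport u, Φ (t * u x) x / x.2 = 0 := fun t x hx => by
    simp [image_eq_zero_of_notMem_tsupport hx, hΦ0]
  have hjoint : Continuous fun p : ℝ × (ℝ × ℝ) => Φ (p.1 * u p.2) p.2 / p.2.2 := by
    refine Continuous.div_of_eventually_zero (by fun_prop) (by fun_prop) fun p hp => ?_
    have hpu : p.2 ∉ tsupport u := fun hpu => (hD0 _ (huD hpu)).ne' hp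
    filter_upwards [continuous_snd.continuousAt.preimage_mem_nhds
      ((isClosed_tsupport u).isOpen_compl.mem_nhds hpu)] with p' hp'
    simp [image_eq_zero_of_notMem_tsupport hp', hΦ0]
  have hrestrict : ∀ t, ∫ x in D, Φ (t * u x) x / x.2 = ∫ x in tsupport u, Φ (t * u x) x / x.2 :=
    fun t => by
      rw [setIntegral_eq_integral_of_forall_compl_eq_zero fun x hx => hvanish t x (mt (@huD x) hx),
        setIntegral_eq_integral_of_forall_compl_eq_zero (hvanish t)]
  simp only [hrestrict]
  exact continuous_parametric_integral_of_continuous hjoint huc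

end WeightedIntegrands

section Admissible

variable {D : Set (ℝ × ℝ)} {φ : ℝ × ℝ → ℝ}

theorem Adm.mul_left (hφ : Adm D φ) (t : ℝ) : Adm D fun x => t * φ x := by
  have hsupp : tsupport (fun x => t * φ x) ⊆ tsupport φ :=
    closure_mono fun x hx hφx => hx (by simp [hφx])
  exact ⟨contDiff_const.mul hφ.1, hφ.2.1.of_isClosed_subset (isClosed_tsupport _) hsupp,
    hsupp.trans hφ.2.2⟩

theorem Adm.tsupport_pos (hφ : Adm D φ) (hD0 : ∀ x ∈ D, 0 < x.2) :
    ∀ x ∈ tsupport φ, 0 < x.2 :=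
  fun x hx => hD0 x (hφ.2.2 hx)

theorem gradsq_nonneg (f : ℝ × ℝ → ℝ) (x : ℝ × ℝ) : 0 ≤ gradsq f x := by
  unfold gradsq
  positivity

theorem Hnormsq_nonneg (hD : MeasurableSet D) (hD0 : ∀ x ∈ D, 0 < x.2) (φ : ℝ × ℝ → ℝ) :
    0 ≤ Hnormsq D φ :=
  mul_nonneg (by positivity)
    (setIntegral_nonneg hD fun x hx => div_nonneg (gradsq_nonneg φ x) (hD0 x hx).le)

theorem Hnormsq_mul_left (hφ : Differentiable ℝ φ) (t : ℝ) :
    Hnormsq D (fun x => t * φ x) = t ^ 2 * Hnormsq D φ := by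
  have hgrad : ∀ x, gradsq (fun y => t * φ y) x = t ^ 2 * gradsq φ x := fun x => by
    simp only [gradsq, pz2, pr2, fderiv_const_mul (hφ x) t, FunLike.coe_smul, Pi.smul_apply,
      smul_eq_mul]
    ring
  simp only [Hnormsq, hgrad, mul_div_assoc, integral_const_mul]
  ring

theorem fderiv_eq_zero_of_gradsq_eq_zero {x : ℝ × ℝ} (h : gradsq φ x = 0) :
    fderiv ℝ φ x = 0 := by
  obtain ⟨hz, hr⟩ := (add_eq_zero_iff_of_nonneg (sq_nonneg _) (sq_nonneg _)).1 h
  refine ContinuousLinearMap.ext fun v => ?_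
  rw [show v = v.1 • ((1 : ℝ), (0 : ℝ)) + v.2 • ((0 : ℝ), (1 : ℝ)) by ext <;> simp, map_add,
    map_smul, map_smul]
  simp [show fderiv ℝ φ x (1, 0) = 0 from pow_eq_zero_iff two_ne_zero |>.1 hz,
    show fderiv ℝ φ x (0, 1) = 0 from pow_eq_zero_iff two_ne_zero |>.1 hr]

theorem gradsq_of_notMem_tsupport {x : ℝ × ℝ} (hx : x ∉ tsupport φ) : gradsq φ x = 0 := by
  simp [gradsq, pz2, pr2, fderiv_of_notMem_tsupport ℝ hx]

theorem Adm.eq_zero_of_Hnormsq_eq_zero (hφ : Adm D φ) (hD0 : ∀ x ∈ D, 0 < x.2)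
    (h0 : Hnormsq D φ = 0) : φ = 0 := by
  have hgrad_supp : tsupport (gradsq φ) ⊆ tsupport φ :=
    closure_minimal (fun x hx => by_contra fun hxφ => hx (gradsq_of_notMem_tsupport hxφ))
      (isClosed_tsupport φ)
  have hgrad : Continuous (gradsq φ) := by
    have := hφ.1.continuous_fderiv (by simp)
    unfold gradsq pz2 pr2
    fun_prop
  have hpos : ∀ x ∈ tsupport φ, 0 < x.2 := hφ.tsupport_pos hD0
  set G := fun x : ℝ × ℝ => gradsq φ x / x.2
  have hG_nonneg : 0 ≤ G := fun x => by
    by_cases hx : x ∈ tsupport φ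
    · exact div_nonneg (gradsq_nonneg φ x) (hpos x hx).le
    · simp [G, gradsq_of_notMem_tsupport hx]
  have hG_int : ∫ x, G x = 0 := by
    rw [← setIntegral_eq_integral_of_forall_compl_eq_zero (s := D) fun x hx => by
      simp [G, gradsq_of_notMem_tsupport fun h => hx (hφ.2.2 h)]]
    simpa [Hnormsq, Real.pi_ne_zero] using h0
  have hG0 : ∀ x, G x = 0 := fun x => by_contra fun hx =>
    (Continuous.integral_pos_of_hasCompactSupport_nonneg_nonzero
      (continuous_div_snd hgrad fun x hx => hpos x (hgrad_supp hx))
      (hφ.2.1.mono' ((subset_tsupport _).trans hgrad_supp)).div_snd hG_nonneg hx).ne'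
      hG_int
  have hdφ : ∀ x, fderiv ℝ φ x = 0 := fun x => by
    by_cases hx : x ∈ tsupport φ
    · exact fderiv_eq_zero_of_gradsq_eq_zero
        ((div_eq_zero_iff.1 (hG0 x)).resolve_right (hpos x hx).ne')
    · exact fderiv_of_notMem_tsupport ℝ hx
  funext x
  -- `φ` is constant, and `(0, 0)` lies on the axis, outside `tsupport φ`.
  rw [is_const_of_fderiv_eq_zero (hφ.1.differentiable (by simp)) hdφ x (0, 0)]
  exact image_eq_zero_of_notMem_tsupport fun h => (hpos _ h).ne' rfl

end Admissible

def nehariDensity (q c s : ℝ) : ℝ :=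
  max (s - c) 0 ^ (2 * q - 1) * s - max (s - c) 0 ^ (2 * q) / q

section NehariDensity

variable {q c s t : ℝ}

theorem nehariDensity_eq (hq : 1 / 2 < q) :
    nehariDensity q c s
      = (1 - q⁻¹) * max (s - c) 0 ^ (2 * q) + c * max (s - c) 0 ^ (2 * q - 1) := by
  rw [nehariDensity, max_sub_rpow_mul_self hq]
  ring

theorem nehariDensity_zero (hq : 0 < q) (hc : 0 ≤ c) : nehariDensity q c 0 = 0 := by
  rw [nehariDensity, zero_sub, max_eq_right (neg_nonpos.2 hc),
    Real.zero_rpow (by linarith : 2 * q ≠ 0)]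
  ring

theorem max_mul_sub_le (hc : 0 ≤ c) (ht0 : 0 ≤ t) (ht1 : t ≤ 1) :
    max (t * s - c) 0 ≤ max (s - c) 0 := by
  rcases le_total s 0 with hs | hs
  · exact (max_eq_right (by nlinarith)).trans_le (le_max_right _ _)
  · exact max_le_max (by nlinarith) le_rfl

theorem nehariDensity_mul_le (hq : 1 < q) (hc : 0 ≤ c) (ht0 : 0 ≤ t) (ht1 : t ≤ 1) :
    nehariDensity q c (t * s) ≤ nehariDensity q c s := by
  have hm := max_mul_sub_le (s := s) hc ht0 ht1
  have hq' : 0 ≤ 1 - q⁻¹ := sub_nonneg.2 (inv_le_one_of_one_le₀ hq.le)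
  rw [nehariDensity_eq (by linarith), nehariDensity_eq (by linarith)]
  gcongr
  linarith

theorem nehariDensity_mul_lt (hq : 1 < q) (hc : 0 ≤ c) (ht1 : t < 1)
    (hs : c < s) : nehariDensity q c (t * s) < nehariDensity q c s := by
  have hm : max (t * s - c) 0 < max (s - c) 0 :=
    (max_lt (by nlinarith) (by linarith)).trans_le (le_max_left _ _)
  have hq' : 0 < 1 - q⁻¹ := sub_pos.2 (inv_lt_one_of_one_lt₀ hq)
  have hpow := Real.rpow_lt_rpow (le_max_right _ _) hm (by linarith : 0 < 2 * q)
  have hpow' := Real.rpow_le_rpow (le_max_right _ _) hm.le (by linarith : 0 ≤ 2 * q - 1)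
  rw [nehariDensity_eq (by linarith), nehariDensity_eq (by linarith)]
  exact add_lt_add_of_lt_of_le (mul_lt_mul_of_pos_left hpow hq')
    (mul_le_mul_of_nonneg_left hpow' hc)

theorem continuous_nehariDensity (hq : 1 / 2 < q) :
    Continuous fun p : ℝ × ℝ => nehariDensity q p.1 p.2 := by
  unfold nehariDensity
  fun_prop (disch := linarith)

end NehariDensity

def nehariEnergy (D : Set (ℝ × ℝ)) (q gam : ℝ) (φ : ℝ × ℝ → ℝ) : ℝ :=
  nehariIntegral D q gam φ - jIntegral D q gam φ / q

section Nehari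

variable {D : Set (ℝ × ℝ)} {q lam gam : ℝ} {φ : ℝ × ℝ → ℝ}

theorem Ifun_eq (D : Set (ℝ × ℝ)) (q lam gam : ℝ) (φ : ℝ × ℝ → ℝ) :
    Ifun D q lam gam φ = Hnormsq D φ / 2 - π ^ 2 * lam / q * jIntegral D q gam φ :=
  rfl

theorem IprimeSelf_eq (D : Set (ℝ × ℝ)) (q lam gam : ℝ) (φ : ℝ × ℝ → ℝ) :
    IprimeSelf D q lam gam φ = Hnormsq D φ - 2 * π ^ 2 * lam * nehariIntegral D q gam φ :=
  rfl

theorem Ifun_eq_of_IprimeSelf_eq_zero (h : IprimeSelf D q lam gam φ = 0) :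
    Ifun D q lam gam φ = π ^ 2 * lam * nehariEnergy D q gam φ := by
  rw [IprimeSelf_eq] at h
  rw [Ifun_eq, nehariEnergy]
  linear_combination h / 2

theorem nehariIntegral_eq_zero_of_le (hq : 1 / 2 < q) (h : ∀ x, φ x ≤ x.2 ^ 2 + gam) :
    nehariIntegral D q gam φ = 0 := by
  have hvanish : ∀ x : ℝ × ℝ, max (φ x - x.2 ^ 2 - gam) 0 = 0 := fun x =>
    max_eq_right (by linarith [h x])
  simp [nehariIntegral, hvanish, Real.zero_rpow (by linarith : 2 * q - 1 ≠ 0)]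

theorem exists_lt_of_nehariIntegral_ne_zero (hq : 1 / 2 < q)
    (h : nehariIntegral D q gam φ ≠ 0) : ∃ x, x.2 ^ 2 + gam < φ x := by
  by_contra! hle
  exact h (nehariIntegral_eq_zero_of_le hq hle)

theorem Adm.Hnormsq_ne_zero_of_nehariIntegral_ne_zero (hφ : Adm D φ) (hD0 : ∀ x ∈ D, 0 < x.2)
    (hq : 1 / 2 < q) (hgam : 0 ≤ gam) (h : nehariIntegral D q gam φ ≠ 0) : Hnormsq D φ ≠ 0 :=
  fun h0 => h <| by
    rw [hφ.eq_zero_of_Hnormsq_eq_zero hD0 h0]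
    exact nehariIntegral_eq_zero_of_le hq fun x => by rw [Pi.zero_apply]; positivity

theorem Adm.nehariEnergy_eq_setIntegral (hφ : Adm D φ) (hD0 : ∀ x ∈ D, 0 < x.2) (hq : 1 / 2 < q)
    (hgam : 0 ≤ gam) :
    nehariEnergy D q gam φ = ∫ x in D, nehariDensity q (x.2 ^ 2 + gam) (φ x) / x.2 := by
  have hpos := hφ.tsupport_pos hD0
  have hnehari := integrable_apply_comp_div_snd
    (Φ := fun s x => max (s - x.2 ^ 2 - gam) 0 ^ (2 * q - 1) * s)
    (by fun_prop (disch := linarith)) (fun x => by simp) hφ.1.continuous hφ.2.1 hpos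
  have hj := integrable_apply_comp_div_snd
    (Φ := fun s x => max (s - x.2 ^ 2 - gam) 0 ^ (2 * q))
    (by fun_prop (disch := linarith))
    (fun x => by simp [max_eq_right (by nlinarith : -x.2 ^ 2 - gam ≤ 0),
      Real.zero_rpow (by linarith : 2 * q ≠ 0)])
    hφ.1.continuous hφ.2.1 hpos
  rw [nehariEnergy, nehariIntegral, jIntegral, ← integral_div,
    ← integral_sub hnehari.integrableOn (hj.integrableOn.div_const q)]
  congr 1 with x
  rw [nehariDensity, sub_sub]
  ring

theorem Adm.nehariEnergy_mul_lt (hφ : Adm D φ) (hD0 : ∀ x ∈ D, 0 < x.2) (hq : 1 < q)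
    (hgam : 0 ≤ gam) {t : ℝ} (ht0 : 0 ≤ t) (ht1 : t < 1) (hx : ∃ x, x.2 ^ 2 + gam < φ x) :
    nehariEnergy D q gam (fun x => t * φ x) < nehariEnergy D q gam φ := by
  obtain ⟨x₀, hx₀⟩ := hx
  have hq' : 1 / 2 < q := by linarith
  have hpos := hφ.tsupport_pos hD0
  have hdens := continuous_nehariDensity hq'
  set Φ : ℝ → ℝ × ℝ → ℝ :=
    fun s x => nehariDensity q (x.2 ^ 2 + gam) s - nehariDensity q (x.2 ^ 2 + gam) (t * s)
  have hΦ : Continuous Φ.uncurry :=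
    (hdens.comp (f := fun p : ℝ × (ℝ × ℝ) => (p.2.2 ^ 2 + gam, p.1)) (by fun_prop)).sub
      (hdens.comp (f := fun p : ℝ × (ℝ × ℝ) => (p.2.2 ^ 2 + gam, t * p.1)) (by fun_prop))
  have hΦ0 : ∀ x, Φ 0 x = 0 := by simp [Φ]
  have hG_nonneg : 0 ≤ fun x => Φ (φ x) x / x.2 := fun x => by
    by_cases hx : x ∈ tsupport φ
    · exact div_nonneg (sub_nonneg.2 (nehariDensity_mul_le hq (by positivity) ht0 ht1.le))
        (hpos x hx).le
    · simp [image_eq_zero_of_notMem_tsupport hx, hΦ0]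
  have hx₀_supp : x₀ ∈ tsupport φ := subset_tsupport _ fun h => by nlinarith [h ▸ hx₀]
  have hG_x₀ : Φ (φ x₀) x₀ / x₀.2 ≠ 0 :=
    (div_pos (sub_pos.2 (nehariDensity_mul_lt hq (by positivity) ht1 hx₀))
      (hpos x₀ hx₀_supp)).ne'
  have hG_pos := Continuous.integral_pos_of_hasCompactSupport_nonneg_nonzero (μ := volume)
    (continuous_apply_comp_div_snd hΦ hΦ0 hφ.1.continuous hpos)
    (hφ.2.1.apply_comp_div_snd hΦ0) hG_nonneg hG_x₀
  have hint : ∀ u : ℝ × ℝ → ℝ, Adm D u →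
      IntegrableOn (fun x => nehariDensity q (x.2 ^ 2 + gam) (u x) / x.2) D := fun u hu =>
    (integrable_apply_comp_div_snd (Φ := fun s x => nehariDensity q (x.2 ^ 2 + gam) s)
      (hdens.comp (f := fun p : ℝ × (ℝ × ℝ) => (p.2.2 ^ 2 + gam, p.1)) (by fun_prop))
      (fun x => nehariDensity_zero (by linarith) (by positivity)) hu.1.continuous hu.2.1
      (hu.tsupport_pos hD0)).integrableOn
  rw [← sub_pos, hφ.nehariEnergy_eq_setIntegral hD0 hq' hgam,
    (hφ.mul_left t).nehariEnergy_eq_setIntegral hD0 hq' hgam,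
    ← integral_sub (hint φ hφ) (hint _ (hφ.mul_left t)),
    setIntegral_eq_integral_of_forall_compl_eq_zero fun x hx => ?_]
  · simpa only [Φ, sub_div] using hG_pos
  · simp [image_eq_zero_of_notMem_tsupport fun h => hx (hφ.2.2 h),
      nehariDensity_zero (by linarith : 0 < q) (by positivity : 0 ≤ x.2 ^ 2 + gam)]

theorem Adm.exists_IprimeSelf_mul_eq_zero (hφ : Adm D φ) (hD0 : ∀ x ∈ D, 0 < x.2)
    (hq : 1 < q) (hgam : 0 < gam) (hA : 0 ≤ Hnormsq D φ)
    (hneg : IprimeSelf D q lam gam φ < 0) :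
    ∃ t, 0 < t ∧ t < 1 ∧ IprimeSelf D q lam gam (fun x => t * φ x) = 0 := by
  have hg : ∀ t, IprimeSelf D q lam gam (fun x => t * φ x)
      = t ^ 2 * Hnormsq D φ - 2 * π ^ 2 * lam * nehariIntegral D q gam (fun x => t * φ x) :=
    fun t => by rw [IprimeSelf_eq, Hnormsq_mul_left (hφ.1.differentiable (by simp))]
  have hcont : Continuous fun t => IprimeSelf D q lam gam (fun x => t * φ x) := by
    have hnehari : Continuous fun t => nehariIntegral D q gam (fun x => t * φ x) :=
      continuous_setIntegral_apply_mul_div_snd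
        (Φ := fun s x => max (s - x.2 ^ 2 - gam) 0 ^ (2 * q - 1) * s)
        (by fun_prop (disch := linarith)) (fun x => by simp) hφ.1.continuous hφ.2.1 hφ.2.2 hD0
    simp only [hg]
    fun_prop
  -- A small multiple of `φ` stays below the obstacle `r² + γ`, so the nonlinear term vanishes
  obtain ⟨C, hC⟩ := hφ.2.1.exists_bound_of_continuous hφ.1.continuous
  set ε := gam / (gam + |C|)
  have hε0 : 0 < ε := by positivity
  have hε1 : ε ≤ 1 := div_le_one_of_le₀ (by linarith [abs_nonneg C]) (by positivity)
  have hεφ : ∀ x, ε * φ x ≤ x.2 ^ 2 + gam := fun x => by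
    have hφC : φ x ≤ |C| := (le_abs_self _).trans ((hC x).trans (le_abs_self C))
    have : ε * |C| ≤ gam := by
      rw [div_mul_eq_mul_div, div_le_iff₀ (by positivity)]
      nlinarith [abs_nonneg C]
    nlinarith [sq_nonneg x.2]
  have hgε : 0 ≤ IprimeSelf D q lam gam (fun x => ε * φ x) := by
    rw [hg, nehariIntegral_eq_zero_of_le (by linarith) hεφ]
    simpa using mul_nonneg (sq_nonneg ε) hA
  have hg1 : IprimeSelf D q lam gam (fun x => 1 * φ x) < 0 := by simpa using hneg
  obtain ⟨t, ⟨hεt, ht1⟩, ht⟩ := intermediate_value_Icc' hε1 hcont.continuousOn ⟨hg1.le, hgε⟩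
  exact ⟨t, hε0.trans_le hεt, ht1.lt_of_ne (by rintro rfl; exact hg1.ne ht), ht⟩

theorem Adm.exists_Ifun_lt_of_IprimeSelf_neg (hφ : Adm D φ) (hD : MeasurableSet D)
    (hD0 : ∀ x ∈ D, 0 < x.2) (hq : 1 < q) (hlam : 0 < lam) (hgam : 0 < gam)
    (hφ0 : Hnormsq D φ ≠ 0) (hneg : IprimeSelf D q lam gam φ < 0) :
    ∃ φ', Adm D φ' ∧ Hnormsq D φ' ≠ 0 ∧ IprimeSelf D q lam gam φ' = 0 ∧
      Ifun D q lam gam φ' < π ^ 2 * lam * nehariEnergy D q gam φ := by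
  have hA := Hnormsq_nonneg hD hD0 φ
  have hP : nehariIntegral D q gam φ ≠ 0 := fun hP0 => by
    rw [IprimeSelf_eq, hP0] at hneg
    linarith
  obtain ⟨t, ht0, ht1, hNt⟩ := hφ.exists_IprimeSelf_mul_eq_zero hD0 hq hgam hA hneg
  refine ⟨_, hφ.mul_left t, ?_, hNt, ?_⟩
  · rw [Hnormsq_mul_left (hφ.1.differentiable (by simp))]
    exact mul_ne_zero (pow_ne_zero 2 ht0.ne') hφ0
  · rw [Ifun_eq_of_IprimeSelf_eq_zero hNt]
    exact mul_lt_mul_of_pos_left (hφ.nehariEnergy_mul_lt hD0 hq hgam.le ht0.le ht1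
      (exists_lt_of_nehariIntegral_ne_zero (by linarith) hP)) (by positivity)

end Nehari

theorem measurableSet_halfDisk (R : ℝ) : MeasurableSet (halfDisk R) :=
  (measurableSet_lt measurable_const measurable_snd).inter
    (measurableSet_lt (f := fun x : ℝ × ℝ => x.1 ^ 2 + x.2 ^ 2) (by fun_prop) measurable_const)

theorem stmt14_general (R q lam gam : ℝ) (hq : 1 < q) (hlam : 0 < lam)
    (hgam : 0 < gam) (ψ ψs : ℝ × ℝ → ℝ)
    (hAψ : Adm (halfDisk R) ψ) (hne : Hnormsq (halfDisk R) ψ ≠ 0)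
    (hNψ : IprimeSelf (halfDisk R) q lam gam ψ = 0)
    (hmin : ∀ φ : ℝ × ℝ → ℝ, Adm (halfDisk R) φ → Hnormsq (halfDisk R) φ ≠ 0 →
      IprimeSelf (halfDisk R) q lam gam φ = 0 →
      Ifun (halfDisk R) q lam gam ψ ≤ Ifun (halfDisk R) q lam gam φ)
    (hAs : Adm (halfDisk R) ψs)
    (hequi : ∀ r t : ℝ, 0 < t →
      volume {z : ℝ | ((z, r) : ℝ × ℝ) ∈ halfDisk R ∧ t ≤ ψ (z, r)}
        = volume {z : ℝ | ((z, r) : ℝ × ℝ) ∈ halfDisk R ∧ t ≤ ψs (z, r)})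
    (hnorm : Hnormsq (halfDisk R) ψs ≤ Hnormsq (halfDisk R) ψ) :
    Hnormsq (halfDisk R) ψs ≠ 0 ∧ IprimeSelf (halfDisk R) q lam gam ψs = 0 ∧
      Ifun (halfDisk R) q lam gam ψs = Ifun (halfDisk R) q lam gam ψ := by
  have hD := measurableSet_halfDisk R
  have hD0 : ∀ x ∈ halfDisk R, 0 < x.2 := fun x hx => hx.1
  have hequi' : SliceEquimeasurable (halfDisk R) ψ ψs := hequi
  have hmψ := hAψ.1.continuous.measurable
  have hmψs := hAs.1.continuous.measurable
  have hJ := hequi'.jIntegral_eq hD hD0 (by linarith : (0 : ℝ) < q) hgam.le hmψ hmψs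
  have hP := hequi'.nehariIntegral_eq hD hD0 (by linarith : 1 / 2 < q) hgam.le hmψ hmψs
  rw [IprimeSelf_eq] at hNψ
  have hPψ : nehariIntegral (halfDisk R) q gam ψ ≠ 0 := fun hP0 => hne <| by
    rwa [hP0, mul_zero, sub_zero] at hNψ
  have hAs_ne := hAs.Hnormsq_ne_zero_of_nehariIntegral_ne_zero hD0 (by linarith) hgam.le (hP ▸ hPψ)
  have hAs_eq : Hnormsq (halfDisk R) ψs = Hnormsq (halfDisk R) ψ := by
    refine hnorm.antisymm (not_lt.1 fun hlt => ?_)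
    obtain ⟨φ, hφ, hφ0, hNφ, hIφ⟩ := hAs.exists_Ifun_lt_of_IprimeSelf_neg hD hD0 hq hlam hgam
      hAs_ne (by rw [IprimeSelf_eq, ← hP]; linarith)
    rw [nehariEnergy, ← hJ, ← hP, ← nehariEnergy, ← Ifun_eq_of_IprimeSelf_eq_zero hNψ] at hIφ
    exact (hmin φ hφ hφ0 hNφ).not_gt hIφ
  refine ⟨hAs_ne, ?_, ?_⟩
  · rw [IprimeSelf_eq, hAs_eq, ← hP, hNψ]
  · rw [Ifun_eq, Ifun_eq, hAs_eq, hJ]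

/-- If `ψ` minimizes `I` over the Nehari manifold `N`, then its Steiner symmetrization
`ψ*` in the `z`-variable (even in `z`, nonincreasing in `|z|`, equimeasurable with `ψ`,
with `‖ψ*‖_H ≤ ‖ψ‖_H`) also belongs to `N` and `I[ψ*] = I[ψ]`. -/
theorem stmt14 (R q lam gam : ℝ) (hR : 0 < R) (hq : 1 < q) (hlam : 0 < lam)
    (hgam : 0 < gam) (ψ ψs : ℝ × ℝ → ℝ)
    (hAψ : Adm (halfDisk R) ψ) (hne : Hnormsq (halfDisk R) ψ ≠ 0)
    (hNψ : IprimeSelf (halfDisk R) q lam gam ψ = 0)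
    (hmin : ∀ φ : ℝ × ℝ → ℝ, Adm (halfDisk R) φ → Hnormsq (halfDisk R) φ ≠ 0 →
      IprimeSelf (halfDisk R) q lam gam φ = 0 →
      Ifun (halfDisk R) q lam gam ψ ≤ Ifun (halfDisk R) q lam gam φ)
    (hAs : Adm (halfDisk R) ψs)
    (hsym : ∀ z r : ℝ, ψs (z, r) = ψs (-z, r))
    (hmono : ∀ r z z' : ℝ, 0 ≤ z → z ≤ z' → ψs (z', r) ≤ ψs (z, r))
    (hequi : ∀ r t : ℝ, 0 < t →
      volume {z : ℝ | ((z, r) : ℝ × ℝ) ∈ halfDisk R ∧ t ≤ ψ (z, r)}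
        = volume {z : ℝ | ((z, r) : ℝ × ℝ) ∈ halfDisk R ∧ t ≤ ψs (z, r)})
    (hnorm : Hnormsq (halfDisk R) ψs ≤ Hnormsq (halfDisk R) ψ) :
    Hnormsq (halfDisk R) ψs ≠ 0 ∧ IprimeSelf (halfDisk R) q lam gam ψs = 0 ∧
      Ifun (halfDisk R) q lam gam ψs = Ifun (halfDisk R) q lam gam ψ :=
  stmt14_general R q lam gam hq hlam hgam ψ ψs hAψ hne hNψ hmin hAs hequi hnorm

end
end
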